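/- arXiv:1612.02356 — 3 statements merged into one kernel-verified Lean document; each statement's English description precedes it below -/
import Mathlib

section
/- Let R be an equivalence relation on {1, …, n} such that: (1) i and i+1 are never equivalent for 1 ≤ i < n; and (2) for any two distinct equivalence classes L and L', the class L' is contained in a single 'gap' of L, i.e., there are no elements a < b < c < d with a, c in one class and b, d in the other (the classes are non-crossing). Then the number of equivalence classes of R is at least ⌊n/2⌋ + 1. -/
set_option maxHeartbeats 1600000
set_option maxRecDepth 8000

private lemma exists_emb {n k : ℕ} (e : Fin k → Fin n)
    (R : Fin n → Fin n → Prop) (hR : Equivalence R)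
    (hR' : Equivalence (fun i j => R (e i) (e j))) :
    ∃ g : Quotient (Setoid.mk (fun i j => R (e i) (e j)) hR') → Quotient (Setoid.mk R hR),
      Function.Injective g ∧ ∀ i, g (Quotient.mk _ i) = Quotient.mk _ (e i) := by
  refine ⟨Quotient.lift (fun i => Quotient.mk _ (e i)) (fun a b h => Quotient.sound h), ?_,
    fun i => rfl⟩
  intro x y
  induction x using Quotient.ind with | _ a =>
  induction y using Quotient.ind with | _ b =>
  intro h
  have h2 : Quotient.mk (Setoid.mk R hR) (e a) = Quotient.mk (Setoid.mk R hR) (e b) := h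
  have h3 : R (e a) (e b) := Quotient.exact h2
  exact Quotient.sound h3

private lemma pullback_equiv {n k : ℕ} (e : Fin k → Fin n)
    (R : Fin n → Fin n → Prop) (hR : Equivalence R) :
    Equivalence (fun i j => R (e i) (e j)) :=
  ⟨fun _ => hR.refl _, fun h => hR.symm h, fun h h' => hR.trans h h'⟩

private lemma aux : ∀ n : ℕ, 1 ≤ n → ∀ (R : Fin n → Fin n → Prop) (hR : Equivalence R),
    (∀ i j : Fin n, (j : ℕ) = (i : ℕ) + 1 → ¬ R i j) →
    (∀ a b c d : Fin n, a < b → b < c → c < d → R a c → R b d → R a b) →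
    n / 2 + 1 ≤ Nat.card (Quotient (Setoid.mk R hR)) := by
  intro n
  classical
  induction n using Nat.strong_induction_on with
  | _ n IH =>
  intro hn R hR hcons hnc
  rcases Nat.lt_or_ge n 2 with h2 | h2
  · -- n = 1
    have hne : Nonempty (Quotient (Setoid.mk R hR)) :=
      ⟨Quotient.mk _ ⟨0, by omega⟩⟩
    have := Nat.card_pos (α := Quotient (Setoid.mk R hR))
    omega
  · set last : Fin n := ⟨n - 1, by omega⟩ with hlast
    have hlastval : (last : ℕ) = n - 1 := rfl
    set T := Finset.univ.filter (fun i : Fin n => i < last ∧ R i last) with hT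
    by_cases hTne : T.Nonempty
    · -- the class of `last` contains another element; take the maximal one
      set m := T.max' hTne with hm
      have hmT : m ∈ T := T.max'_mem hTne
      have hmlt : (m : ℕ) < n - 1 := by
        have h := (Finset.mem_filter.mp hmT).2.1
        rw [Fin.lt_def] at h
        omega
      have hmR : R m last := (Finset.mem_filter.mp hmT).2.2
      have hmax : ∀ x : Fin n, (m : ℕ) < (x : ℕ) → (x : ℕ) < n - 1 → ¬ R x last := by
        intro x hx hxn hRx
        have hxT : x ∈ T := by
          rw [hT, Finset.mem_filter]
          exact ⟨Finset.mem_univ _, Fin.lt_def.mpr (by omega), hRx⟩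
        have h := T.le_max' x hxT
        rw [← hm] at h
        have : (x : ℕ) ≤ (m : ℕ) := h
        omega
      -- m is not adjacent to last
      have hm3 : (m : ℕ) + 2 ≤ n - 1 := by
        rcases Nat.lt_or_ge ((m : ℕ) + 1) (n - 1) with h | h
        · omega
        · exact absurd (hcons m last (by omega)) (fun hc => hc hmR)
      have key : ∀ a b : Fin n, (a : ℕ) ≤ (m : ℕ) → (m : ℕ) < (b : ℕ) → (b : ℕ) < n - 1 →
          ¬ R a b := by
        intro a b ha hb hbn hab
        have hRmb : ¬ R m b := by
          intro h
          exact hmax b hb hbn (hR.trans (hR.symm h) hmR)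
        rcases eq_or_lt_of_le ha with heq | hlt
        · have : a = m := Fin.ext heq
          exact hRmb (this ▸ hab)
        · have h1 : R a m := hnc a m b last (Fin.lt_def.mpr hlt) (Fin.lt_def.mpr hb)
            (Fin.lt_def.mpr (by omega)) hab hmR
          exact hRmb (hR.trans (hR.symm h1) hab)
      -- two restricted relations
      have hmn : (m : ℕ) < n := m.isLt
      obtain ⟨g₁, hg₁inj, hg₁mk⟩ := exists_emb
        (fun i : Fin ((m : ℕ) + 1) => (⟨(i : ℕ), by omega⟩ : Fin n)) R hR
        (pullback_equiv _ R hR)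
      obtain ⟨g₂, hg₂inj, hg₂mk⟩ := exists_emb
        (fun i : Fin (n - 2 - (m : ℕ)) => (⟨(m : ℕ) + 1 + (i : ℕ), by omega⟩ : Fin n)) R hR
        (pullback_equiv _ R hR)
      have hb₁ := IH ((m : ℕ) + 1) (by omega) (by omega) _ (pullback_equiv
          (fun i : Fin ((m : ℕ) + 1) => (⟨(i : ℕ), by omega⟩ : Fin n)) R hR)
        (fun i j hij => hcons _ _ (show (j : ℕ) = (i : ℕ) + 1 from hij))
        (by
          intro a b c d hab hbc hcd h1 h2
          refine hnc _ _ _ _ ?_ ?_ ?_ h1 h2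
          · show (a : ℕ) < (b : ℕ); exact hab
          · show (b : ℕ) < (c : ℕ); exact hbc
          · show (c : ℕ) < (d : ℕ); exact hcd)
      have hb₂ := IH (n - 2 - (m : ℕ)) (by omega) (by omega) _ (pullback_equiv
          (fun i : Fin (n - 2 - (m : ℕ)) => (⟨(m : ℕ) + 1 + (i : ℕ), by omega⟩ : Fin n)) R hR)
        (fun i j hij => hcons _ _ (by
          show (m : ℕ) + 1 + (j : ℕ) = (m : ℕ) + 1 + (i : ℕ) + 1
          have : (j : ℕ) = (i : ℕ) + 1 := hij
          omega))
        (by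
          intro a b c d hab hbc hcd h1 h2
          refine hnc _ _ _ _ ?_ ?_ ?_ h1 h2
          · show (m : ℕ) + 1 + (a : ℕ) < (m : ℕ) + 1 + (b : ℕ)
            have : (a : ℕ) < (b : ℕ) := hab; omega
          · show (m : ℕ) + 1 + (b : ℕ) < (m : ℕ) + 1 + (c : ℕ)
            have : (b : ℕ) < (c : ℕ) := hbc; omega
          · show (m : ℕ) + 1 + (c : ℕ) < (m : ℕ) + 1 + (d : ℕ)
            have : (c : ℕ) < (d : ℕ) := hcd; omega)
      have hGinj : Function.Injective (Sum.elim g₁ g₂) := by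
        rintro (x | x) (y | y) hxy
        · exact congrArg Sum.inl (hg₁inj hxy)
        · exfalso
          induction x using Quotient.ind with | _ a =>
          induction y using Quotient.ind with | _ b =>
          rw [Sum.elim_inl, Sum.elim_inr, hg₁mk, hg₂mk] at hxy
          have hab : R ⟨(a : ℕ), by omega⟩ ⟨(m : ℕ) + 1 + (b : ℕ), by omega⟩ :=
            Quotient.exact hxy
          have ha := a.isLt
          have hb := b.isLt
          exact key _ _ (show (a : ℕ) ≤ (m : ℕ) by omega)
            (show (m : ℕ) < (m : ℕ) + 1 + (b : ℕ) by omega)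
            (show (m : ℕ) + 1 + (b : ℕ) < n - 1 by omega) hab
        · exfalso
          induction x using Quotient.ind with | _ a =>
          induction y using Quotient.ind with | _ b =>
          rw [Sum.elim_inr, Sum.elim_inl, hg₁mk, hg₂mk] at hxy
          have hab : R ⟨(b : ℕ), by omega⟩ ⟨(m : ℕ) + 1 + (a : ℕ), by omega⟩ :=
            hR.symm (Quotient.exact hxy)
          have ha := a.isLt
          have hb := b.isLt
          exact key _ _ (show (b : ℕ) ≤ (m : ℕ) by omega)
            (show (m : ℕ) < (m : ℕ) + 1 + (a : ℕ) by omega)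
            (show (m : ℕ) + 1 + (a : ℕ) < n - 1 by omega) hab
        · exact congrArg Sum.inr (hg₂inj hxy)
      have hcard := Nat.card_le_card_of_injective _ hGinj
      rw [Nat.card_sum] at hcard
      beta_reduce at hb₁ hb₂
      omega
    · -- the class of `last` is a singleton
      have hker : ∀ a : Fin n, (a : ℕ) < n - 1 → ¬ R a last := by
        intro a ha hRa
        refine hTne ⟨a, ?_⟩
        rw [hT, Finset.mem_filter]
        exact ⟨Finset.mem_univ _, Fin.lt_def.mpr (by omega), hRa⟩
      obtain ⟨g, hginj, hgmk⟩ := exists_emb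
        (fun i : Fin (n - 1) => (⟨(i : ℕ), by omega⟩ : Fin n)) R hR
        (pullback_equiv _ R hR)
      have hb := IH (n - 1) (by omega) (by omega) _ (pullback_equiv
          (fun i : Fin (n - 1) => (⟨(i : ℕ), by omega⟩ : Fin n)) R hR)
        (fun i j hij => hcons _ _ (show (j : ℕ) = (i : ℕ) + 1 from hij))
        (by
          intro a b c d hab hbc hcd h1 h2
          refine hnc _ _ _ _ ?_ ?_ ?_ h1 h2
          · show (a : ℕ) < (b : ℕ); exact hab
          · show (b : ℕ) < (c : ℕ); exact hbc
          · show (c : ℕ) < (d : ℕ); exact hcd)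
      have hGinj : Function.Injective
          (Sum.elim g (fun _ : PUnit.{1} => Quotient.mk (Setoid.mk R hR) last)) := by
        rintro (x | x) (y | y) hxy
        · exact congrArg Sum.inl (hginj hxy)
        · exfalso
          induction x using Quotient.ind with | _ a =>
          rw [Sum.elim_inl, Sum.elim_inr, hgmk] at hxy
          have ha := a.isLt
          exact hker ⟨(a : ℕ), by omega⟩ (show (a : ℕ) < n - 1 by omega) (Quotient.exact hxy)
        · exfalso
          induction y using Quotient.ind with | _ a =>
          rw [Sum.elim_inr, Sum.elim_inl, hgmk] at hxy
          have ha := a.isLt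
          exact hker ⟨(a : ℕ), by omega⟩ (show (a : ℕ) < n - 1 by omega) (hR.symm (Quotient.exact hxy))
        · rfl
      have hcard := Nat.card_le_card_of_injective _ hGinj
      rw [Nat.card_sum] at hcard
      have hpu : Nat.card PUnit.{1} = 1 := by simp
      beta_reduce at hb
      omega

/-- An equivalence relation on `{1, …, n}` (modeled as `Fin n`) in which
consecutive elements are never equivalent and whose classes are non-crossing
(there are no `a < b < c < d` with `a ~ c`, `b ~ d` and `¬ a ~ b`) has at least
`⌊n/2⌋ + 1` equivalence classes. -/
theorem noncrossing_equiv_classes_lower_bound (n : ℕ) (hn : 1 ≤ n)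
    (R : Fin n → Fin n → Prop) (hR : Equivalence R)
    (hcons : ∀ i j : Fin n, (j : ℕ) = (i : ℕ) + 1 → ¬ R i j)
    (hnc : ∀ a b c d : Fin n, a < b → b < c → c < d → R a c → R b d → R a b) :
    n / 2 + 1 ≤ Nat.card (Quotient (Setoid.mk R hR)) := by
  exact aux n hn R hR hcons hnc
end

section
/- Let d ≥ 2 and ν ≥ 1. Suppose x and y are fixed points of m_d^ν on ℝ/ℤ (m_d = multiplication by d) with dist(x, y) = 1/(d^ν - 1). Then dist(m_d^{ν-1}(x), m_d^{ν-1}(y)) = 1/(d(d^ν-1)) + ℓ/d for some integer ℓ with 1 ≤ ℓ ≤ d - 1. -/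
/-!
Choose a real representative of `x - y` whose absolute value is `‖x - y‖ = 1/(d^ν - 1)`.
Multiplying it by `d^(ν-1)` gives `d^(ν-1)/(d^ν - 1) = 1/(d(d^ν - 1)) + 1/d`, so `ℓ = 1` works,
with the sign of the representative deciding between `x - y` and `y - x`.
-/

theorem AddCircle.eq_coe_norm_or_neg_eq_coe_norm {p : ℝ} (z : AddCircle p) :
    z = (‖z‖ : ℝ) ∨ -z = (‖z‖ : ℝ) := by
  induction z using QuotientAddGroup.induction_on with
  | H x =>
    have hrep : ((x - round (p⁻¹ * x) * p : ℝ) : AddCircle p) = x := by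
      rw [AddCircle.coe_sub, ← zsmul_eq_mul, AddCircle.coe_zsmul, AddCircle.coe_period,
        smul_zero, sub_zero]
    rw [AddCircle.norm_eq, ← hrep]
    rcases abs_choice (x - round (p⁻¹ * x) * p) with h | h <;> rw [h]
    · exact .inl rfl
    · exact .inr (AddCircle.coe_neg _).symm

theorem pow_div_pow_succ_sub_one {a : ℝ} (ha : a ≠ 0) (n : ℕ) (h : a ^ (n + 1) ≠ 1) :
    a ^ n / (a ^ (n + 1) - 1) = 1 / (a * (a ^ (n + 1) - 1)) + 1 / a := by
  have : a ^ (n + 1) - 1 ≠ 0 := sub_ne_zero.mpr h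
  field_simp
  ring

theorem iterate_dist_form_general (d : ℕ) (hd : 2 ≤ d) (ν : ℕ) (hν : 1 ≤ ν)
    (x y : AddCircle (1 : ℝ))
    (hdist : dist x y = 1 / ((d : ℝ) ^ ν - 1)) :
    ∃ ℓ : ℕ, 1 ≤ ℓ ∧ ℓ ≤ d - 1 ∧
      (d ^ (ν - 1) • (x - y) =
          ((1 / ((d : ℝ) * ((d : ℝ) ^ ν - 1)) + (ℓ : ℝ) / d : ℝ) : AddCircle (1 : ℝ)) ∨
        d ^ (ν - 1) • (y - x) =
          ((1 / ((d : ℝ) * ((d : ℝ) ^ ν - 1)) + (ℓ : ℝ) / d : ℝ) : AddCircle (1 : ℝ))) := by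
  obtain ⟨n, rfl⟩ : ∃ n, ν = n + 1 := ⟨ν - 1, by omega⟩
  have hd_gt_one : (1 : ℝ) < d := by exact_mod_cast hd
  have key : d ^ n • ((1 / ((d : ℝ) ^ (n + 1) - 1) : ℝ) : AddCircle (1 : ℝ)) =
      ((1 / ((d : ℝ) * ((d : ℝ) ^ (n + 1) - 1)) + ((1 : ℕ) : ℝ) / d : ℝ) : AddCircle (1 : ℝ)) := by
    rw [← AddCircle.coe_nsmul, nsmul_eq_mul, Nat.cast_pow, ← mul_div_assoc, mul_one,
      pow_div_pow_succ_sub_one (by positivity) n (one_lt_pow₀ hd_gt_one n.succ_ne_zero).ne',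
      Nat.cast_one]
  refine ⟨1, le_rfl, by omega, ?_⟩
  rw [dist_eq_norm] at hdist
  rw [add_tsub_cancel_right, ← neg_sub x y, ← key]
  rcases (x - y).eq_coe_norm_or_neg_eq_coe_norm with h | h <;> rw [h, hdist]
  · exact .inl rfl
  · exact .inr rfl

/-- If `x, y` are fixed points of multiplication by `d^ν` on `ℝ/ℤ`
(`d ≥ 2`, `ν ≥ 1`) with `dist x y = 1/(d^ν - 1)`, then the difference of
`m_d^{ν-1}(x)` and `m_d^{ν-1}(y)` is, up to sign, `1/(d(d^ν - 1)) + ℓ/d` for some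
integer `1 ≤ ℓ ≤ d - 1` (in particular `ℓ ≠ 0`). -/
theorem iterate_dist_form (d : ℕ) (hd : 2 ≤ d) (ν : ℕ) (hν : 1 ≤ ν)
    (x y : AddCircle (1 : ℝ)) (hx : d ^ ν • x = x) (hy : d ^ ν • y = y)
    (hdist : dist x y = 1 / ((d : ℝ) ^ ν - 1)) :
    ∃ ℓ : ℕ, 1 ≤ ℓ ∧ ℓ ≤ d - 1 ∧
      (d ^ (ν - 1) • (x - y) =
          ((1 / ((d : ℝ) * ((d : ℝ) ^ ν - 1)) + (ℓ : ℝ) / d : ℝ) : AddCircle (1 : ℝ)) ∨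
        d ^ (ν - 1) • (y - x) =
          ((1 / ((d : ℝ) * ((d : ℝ) ^ ν - 1)) + (ℓ : ℝ) / d : ℝ) : AddCircle (1 : ℝ))) :=
  iterate_dist_form_general d hd ν hν x y hdist
end

section
/- Let f : X → X be a continuous map of a compact metric space and suppose there exist d ≥ 2 nonempty disjoint compact sets W_1, …, W_d contained in an open set U with ⋃ W_i = f^{-1}(U)-closure, and f(W_i) ⊇ closure(U) for every i. Then for every k ≥ 1 and every periodic sequence a ∈ {1,…,d}^ℕ of period k, the set K_a = ⋂_{n≥1} W^n_{a|n} (where W^n_a = W_{a_1} ∩ f^{-1}(W_{a_2}) ∩ … ∩ f^{-(n-1)}(W_{a_n})) is a nonempty compact set invariant under f^k, and the sets K_a for distinct sequences a are pairwise disjoint. -/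
/-- Let `f : X → X` be continuous on a compact metric space, and let
`W 1, …, W d` (`d ≥ 2`) be nonempty pairwise disjoint compact sets contained in an
open set `U` with `⋃ W i = closure (f⁻¹ U)` and `closure U ⊆ f '' (W i)` for each `i`.
For `a : ℕ → Fin d` set `K a = {x | ∀ j, f^[j] x ∈ W (a j)}` (the intersection of the
sets `W^n_{a|n}`).  Then for every `k ≥ 1` and every `a` of period `k`
(`a (i + k) = a i` for all `i`), the set `K a` is nonempty, compact and invariant under
`f^[k]`; and the sets `K a` for distinct sequences `a` are pairwise disjoint. -/
theorem coding_sets_nonempty_compact_invariant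
    {X : Type*} [MetricSpace X] [CompactSpace X]
    (f : X → X) (hf : Continuous f) (d : ℕ) (hd : 2 ≤ d)
    (U : Set X) (hU : IsOpen U) (W : Fin d → Set X)
    (hWne : ∀ i, (W i).Nonempty) (hWcpt : ∀ i, IsCompact (W i))
    (hWdisj : Pairwise fun i j => Disjoint (W i) (W j))
    (hWU : ∀ i, W i ⊆ U)
    (hWeq : (⋃ i, W i) = closure (f ⁻¹' U))
    (hWonto : ∀ i, closure U ⊆ f '' W i) :
    (∀ (k : ℕ), 1 ≤ k → ∀ a : ℕ → Fin d, (∀ i, a (i + k) = a i) →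
        ({x : X | ∀ j : ℕ, f^[j] x ∈ W (a j)}.Nonempty ∧
          IsCompact {x : X | ∀ j : ℕ, f^[j] x ∈ W (a j)} ∧
          f^[k] '' {x : X | ∀ j : ℕ, f^[j] x ∈ W (a j)} ⊆
            {x : X | ∀ j : ℕ, f^[j] x ∈ W (a j)})) ∧
      ∀ a b : ℕ → Fin d, a ≠ b →
        Disjoint {x : X | ∀ j : ℕ, f^[j] x ∈ W (a j)}
          {x : X | ∀ j : ℕ, f^[j] x ∈ W (b j)} := by

  -- finite orbit segments are nonempty
  have key : ∀ (n : ℕ) (a : ℕ → Fin d), ∃ x, ∀ j ≤ n, f^[j] x ∈ W (a j) := by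
    intro n
    induction n with
    | zero =>
      intro a
      obtain ⟨x, hx⟩ := hWne (a 0)
      exact ⟨x, fun j hj => by simpa [Nat.le_zero.mp hj] using hx⟩
    | succ n ih =>
      intro a
      obtain ⟨y, hy⟩ := ih (fun j => a (j + 1))
      have hy1 : y ∈ closure U := subset_closure (hWU (a 1) (by simpa using hy 0 (Nat.zero_le _)))
      obtain ⟨x, hxW, hfx⟩ := hWonto (a 0) hy1
      refine ⟨x, fun j hj => ?_⟩
      match j with
      | 0 => simpa using hxW
      | (m+1) =>
        have : f^[m+1] x = f^[m] y := by
          rw [Function.iterate_succ_apply, hfx]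
        rw [this]
        exact hy m (Nat.succ_le_succ_iff.mp hj)
  have closedW : ∀ i, IsClosed (W i) := fun i => (hWcpt i).isClosed
  have Kclosed : ∀ a : ℕ → Fin d, IsClosed {x : X | ∀ j : ℕ, f^[j] x ∈ W (a j)} := by
    intro a
    have : {x : X | ∀ j : ℕ, f^[j] x ∈ W (a j)} = ⋂ j, (f^[j]) ⁻¹' (W (a j)) := by
      ext x; simp [Set.mem_iInter]
    rw [this]
    exact isClosed_iInter fun j => (closedW (a j)).preimage (hf.iterate j)
  constructor
  · intro k hk a ha
    have Kcpt : IsCompact {x : X | ∀ j : ℕ, f^[j] x ∈ W (a j)} :=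
      (Kclosed a).isCompact
    refine ⟨?_, Kcpt, ?_⟩
    · -- nonemptiness via decreasing compact sets
      set V : ℕ → Set X := fun n => ⋂ j ∈ Set.Iic n, (f^[j]) ⁻¹' (W (a j)) with hV
      have hVne : ∀ n, (V n).Nonempty := by
        intro n
        obtain ⟨x, hx⟩ := key n a
        exact ⟨x, by simp only [hV, Set.mem_iInter]; exact fun j hj => hx j hj⟩
      have hVclosed : ∀ n, IsClosed (V n) :=
        fun n => isClosed_biInter fun j _ => (closedW (a j)).preimage (hf.iterate j)
      have hVanti : ∀ n, V (n + 1) ⊆ V n := by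
        intro n x hx
        simp only [hV, Set.mem_iInter] at hx ⊢
        exact fun j hj => hx j (le_trans hj (Nat.le_succ n))
      have := IsCompact.nonempty_iInter_of_sequence_nonempty_isCompact_isClosed V hVanti
        hVne ((hVclosed 0).isCompact) hVclosed
      obtain ⟨x, hx⟩ := this
      refine ⟨x, fun j => ?_⟩
      simp only [Set.mem_iInter, hV] at hx
      exact hx j j (le_refl j)
    · rintro _ ⟨x, hx, rfl⟩
      intro j
      have : f^[j] (f^[k] x) = f^[j + k] x := by
        rw [← Function.iterate_add_apply, Nat.add_comm]
      rw [this, ← ha j]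
      exact hx (j + k)
  · intro a b hab
    obtain ⟨j, hj⟩ := Function.ne_iff.mp hab
    refine Set.disjoint_left.mpr fun x hxa hxb => ?_
    exact Set.disjoint_left.mp (hWdisj hj) (hxa j) (hxb j)
end
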